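/- Let a ≥ 0 and N ≥ 1 be given, and set λ* = √(8N·a + 1). If λ* ≤ 4N and λ* > 1, then (a)/(λ*−1) + λ*/(8N) ≤ √((a+1)/(2N)). -/
import Mathlib


/-- Key numeric step converting the λ-parameterized PAC-Bayes bound
`Γ(λ) = a/(λ−1) + λ/(8N)` at `λ* = √(8N·a + 1)` into square-root form:
if `1 < λ* ≤ 4N` then `Γ(λ*) ≤ √((a+1)/(2N))`. -/
theorem lambda_grid_bound (a N : ℝ) (ha : 0 ≤ a) (hN : 1 ≤ N)
    (h1 : Real.sqrt (8 * N * a + 1) ≤ 4 * N)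
    (h2 : 1 < Real.sqrt (8 * N * a + 1)) :
    a / (Real.sqrt (8 * N * a + 1) - 1) + Real.sqrt (8 * N * a + 1) / (8 * N)
      ≤ Real.sqrt ((a + 1) / (2 * N)) := by
  set s := Real.sqrt (8 * N * a + 1) with hs
  have hN0 : (0:ℝ) < N := lt_of_lt_of_le one_pos hN
  have hsq : s ^ 2 = 8 * N * a + 1 := Real.sq_sqrt (by nlinarith)
  have key : a / (s - 1) = (s + 1) / (8 * N) := by
    rw [div_eq_div_iff (by linarith) (by linarith)]
    nlinarith
  rw [key]
  have hlhs : (s + 1) / (8 * N) + s / (8 * N) = (2 * s + 1) / (8 * N) := by ring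
  rw [hlhs, show (2:ℝ) * s + 1 = ((2 * s + 1)) from rfl]
  rw [Real.le_sqrt (by positivity)]
  rw [div_pow, div_le_div_iff₀ (by positivity) (by positivity)]
  nlinarith [hsq, h1, hN, sq_nonneg (s - 1)]
  positivity
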